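/- arXiv:1403.5978 — 3 statements merged into one kernel-verified Lean document; each statement's English description precedes it below -/
import Mathlib

section
/- Let N_G(x) = Σ_{T ∈ G} 𝟙_{J_T}(x) be the counting function of a finite family G of intervals {J_T} from a fixed grid D, and suppose: (i) the maximal intervals J ∈ J⁰ of the family satisfy Σ_{J ∈ J⁰} |J| ≤ C₁ 2^{3k}, and (ii) for every interval J, Σ_{T ∈ G : J_T ⊂ J} |J_T| ≤ C₂ 2^{3k} |J| (a Carleson/BMO packing condition). Then G admits a decomposition G = G' ∪ G'' such that ‖N_{G'}‖_∞ ≲ 2^{4k} and ‖N_{G''}‖₁ ≲ 2^{−100k}. -/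
/-!
Let `depth i` count the members of `G` whose interval contains `J i`, and let `U m` be the union
of the intervals of depth at least `m`; it is the superlevel set `{N_G ≥ m}`. Every point of
`U (m + n)` lies in at least `n` intervals of depth at least `m`, so
`n |U (m + n)| ≤ ∑_{depth ≥ m} |J|`, while the packing condition applied to the maximal intervals
of depth at least `m` gives `∑_{depth ≥ m} |J| ≤ q |U m|` with `q = ⌈C₂ 2^{3k}⌉`. Hence `|U|`
halves every `2q` levels. Cutting at depth `M = 1 + 220 k q` leaves `G'`, on which `N_{G'} ≤ M`,
and `G''`, of total length at most `q 2^{-110k} |U 1| ≤ q C₁ 2^{3k - 110k}`.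
-/

open MeasureTheory Finset
open scoped Classical ENNReal

noncomputable section Laminar

variable {α ι : Type*}

def IsLaminar (G : Finset ι) (J : ι → Set α) : Prop :=
  ∀ i ∈ G, ∀ i' ∈ G, J i ⊆ J i' ∨ J i' ⊆ J i ∨ Disjoint (J i) (J i')

def depth (G : Finset ι) (J : ι → Set α) (i : ι) : ℕ := #{i' ∈ G | J i ⊆ J i'}

def deepMembers (G : Finset ι) (J : ι → Set α) (m : ℕ) : Finset ι :=
  {i ∈ G | m ≤ depth G J i}

def CarlesonPacking [MeasurableSpace α] (μ : Measure α) (G : Finset ι) (J : ι → Set α)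
    (q : ℝ≥0∞) : Prop :=
  ∀ i ∈ G, ∑ i' ∈ G with J i' ⊆ J i, μ (J i') ≤ q * μ (J i)

variable {G s : Finset ι} {J : ι → Set α} {i i' : ι} {x : α} {m n M : ℕ}

lemma deepMembers_subset (m : ℕ) : deepMembers G J m ⊆ G := filter_subset _ _

lemma deepMembers_one : deepMembers G J 1 = G :=
  filter_true_of_mem fun i hi => card_pos.2 ⟨i, mem_filter.2 ⟨hi, subset_rfl⟩⟩

namespace IsLaminar

lemma subset_or_subset_of_mem (hG : IsLaminar G J) (hi : i ∈ G) (hi' : i' ∈ G) (hxi : x ∈ J i)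
    (hxi' : x ∈ J i') :
    J i ⊆ J i' ∨ J i' ⊆ J i :=
  (hG i hi i' hi').imp_right (Or.resolve_right · (Set.not_disjoint_iff.2 ⟨x, hxi, hxi'⟩))

lemma exists_forall_subset (hG : IsLaminar G J) (hs : s ⊆ G) (hne : s.Nonempty)
    (hx : ∀ i ∈ s, x ∈ J i) :
    ∃ i₀ ∈ s, ∀ i ∈ s, J i₀ ⊆ J i := by
  obtain ⟨K, hKmem, hKmin⟩ := exists_minimal (hne.image J)
  obtain ⟨i₀, hi₀, rfl⟩ := mem_image.1 hKmem
  refine ⟨i₀, hi₀, fun i hi => ?_⟩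
  rcases hG.subset_or_subset_of_mem (hs hi₀) (hs hi) (hx i₀ hi₀) (hx i hi) with h | h
  · exact h
  · exact hKmin (mem_image_of_mem J hi) h

lemma card_le_of_depth_le (hG : IsLaminar G J) (hs : s ⊆ G) (hx : ∀ i ∈ s, x ∈ J i)
    (hM : ∀ i ∈ s, depth G J i ≤ M) : #s ≤ M := by
  rcases s.eq_empty_or_nonempty with rfl | hne
  · simp
  obtain ⟨i₀, hi₀, hmin⟩ := hG.exists_forall_subset hs hne hx
  exact (card_le_card fun i hi => mem_filter.2 ⟨hs hi, hmin i hi⟩).trans (hM i₀ hi₀)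

lemma le_card_deepMembers (hG : IsLaminar G J) (hi : i ∈ deepMembers G J (m + n))
    (hx : x ∈ J i) :
    n ≤ #{i' ∈ deepMembers G J m | x ∈ J i'} := by
  set A : Finset ι := {i' ∈ G | x ∈ J i'}
  have hA : m + n ≤ #A :=
    (mem_filter.1 hi).2.trans (card_le_card fun i' hi' =>
      mem_filter.2 ⟨(mem_filter.1 hi').1, (mem_filter.1 hi').2 hx⟩)
  have hshallow : #{i' ∈ A | ¬ m ≤ depth G J i'} ≤ m :=
    hG.card_le_of_depth_le (fun i' hi' => (mem_filter.1 (mem_filter.1 hi').1).1)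
      (fun i' hi' => (mem_filter.1 (mem_filter.1 hi').1).2)
      (fun i' hi' => (not_le.1 (mem_filter.1 hi').2).le)
  have hdeep : {i' ∈ A | m ≤ depth G J i'} = {i' ∈ deepMembers G J m | x ∈ J i'} := by
    ext i'; simp only [A, deepMembers, mem_filter]; tauto
  have hsplit := card_filter_add_card_filter_not (s := A) (fun i' => m ≤ depth G J i')
  rw [hdeep] at hsplit
  omega

lemma sum_indicator_le (hG : IsLaminar G J) (M : ℕ) (x : α) :
    ∑ i ∈ G with ¬ M ≤ depth G J i, (J i).indicator (fun _ => (1 : ℝ)) x ≤ M := by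
  have hcard : #{i ∈ {i ∈ G | ¬ M ≤ depth G J i} | x ∈ J i} ≤ M :=
    hG.card_le_of_depth_le (fun i hi => (mem_filter.1 (mem_filter.1 hi).1).1)
      (fun i hi => (mem_filter.1 hi).2)
      (fun i hi => (not_le.1 (mem_filter.1 (mem_filter.1 hi).1).2).le)
  simpa [Set.indicator_apply, sum_boole] using (Nat.cast_le (α := ℝ)).2 hcard

variable [MeasurableSpace α] {μ : Measure α}

lemma natCast_mul_measure_biUnion_le_sum (hG : IsLaminar G J)
    (hmeas : ∀ i ∈ G, MeasurableSet (J i)) (m n : ℕ) :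
    n * μ (⋃ i ∈ deepMembers G J (m + n), J i) ≤ ∑ i ∈ deepMembers G J m, μ (J i) := by
  set N : α → ℝ≥0∞ := fun x => ∑ i ∈ deepMembers G J m, (J i).indicator 1 x
  have hN : ∀ x, N x = #{i ∈ deepMembers G J m | x ∈ J i} := fun x => by
    simp [N, Set.indicator_apply, sum_boole]
  have hNmeas : Measurable N := Finset.measurable_sum _ fun i hi =>
    measurable_one.indicator (hmeas i (deepMembers_subset _ hi))
  have hsub : (⋃ i ∈ deepMembers G J (m + n), J i) ⊆ {x | (n : ℝ≥0∞) ≤ N x} := by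
    simp only [Set.iUnion_subset_iff]
    intro i hi x hx
    simpa [hN] using hG.le_card_deepMembers hi hx
  calc n * μ (⋃ i ∈ deepMembers G J (m + n), J i)
      ≤ n * μ {x | (n : ℝ≥0∞) ≤ N x} := by gcongr
    _ ≤ ∫⁻ x, N x ∂μ := mul_meas_ge_le_lintegral hNmeas _
    _ = ∑ i ∈ deepMembers G J m, μ (J i) := by
      rw [lintegral_finsetSum _ fun i hi =>
        measurable_one.indicator (hmeas i (deepMembers_subset _ hi))]
      exact sum_congr rfl fun i hi =>
        lintegral_indicator_one (hmeas i (deepMembers_subset _ hi))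

lemma sum_measure_le_mul_measure_biUnion (hG : IsLaminar G J)
    (hmeas : ∀ i ∈ G, MeasurableSet (J i)) {q : ℝ≥0∞} (hpack : CarlesonPacking μ G J q)
    (hs : s ⊆ G) :
    ∑ i ∈ s, μ (J i) ≤ q * μ (⋃ i ∈ s, J i) := by
  set tops : Finset (Set α) := {K ∈ s.image J | Maximal (· ∈ s.image J) K}
  have hcover : ∀ i ∈ s, ∃ K ∈ tops, J i ⊆ K := fun i hi => by
    obtain ⟨K, hle, hK⟩ := (s.image J).exists_le_maximal (mem_image_of_mem J hi)
    exact ⟨K, mem_filter.2 ⟨hK.1, hK⟩, hle⟩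
  have htops : ∀ K ∈ tops, ∃ i ∈ s, J i = K := fun K hK => mem_image.1 (mem_filter.1 hK).1
  have hdisj : (tops : Set (Set α)).PairwiseDisjoint id := by
    intro K hK K' hK' hne
    have hKmax := (mem_filter.1 hK).2
    have hK'max := (mem_filter.1 hK').2
    obtain ⟨i, hi, rfl⟩ := htops K hK
    obtain ⟨i', hi', rfl⟩ := htops K' hK'
    rcases hG i (hs hi) i' (hs hi') with h | h | h
    · exact absurd (le_antisymm h (hKmax.2 hK'max.1 h)) hne
    · exact absurd (le_antisymm (hK'max.2 hKmax.1 h) h) hne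
    · exact h
  calc ∑ i ∈ s, μ (J i) ≤ ∑ i ∈ s, ∑ K ∈ tops, if J i ⊆ K then μ (J i) else 0 :=
        sum_le_sum fun i hi => by
          obtain ⟨K, hK, hiK⟩ := hcover i hi
          simpa [hiK] using single_le_sum (f := fun K => if J i ⊆ K then μ (J i) else 0)
            (fun _ _ => zero_le) hK
    _ = ∑ K ∈ tops, ∑ i ∈ s with J i ⊆ K, μ (J i) := by
      rw [sum_comm]; simp_rw [sum_filter]
    _ ≤ ∑ K ∈ tops, q * μ K := sum_le_sum fun K hK => by
      obtain ⟨i, hi, rfl⟩ := htops K hK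
      exact (sum_le_sum_of_subset (filter_subset_filter _ hs)).trans (hpack i (hs hi))
    _ = q * μ (⋃ K ∈ tops, K) := by
      rw [← mul_sum]
      congr 1
      refine (measure_biUnion_finset hdisj fun K hK => ?_).symm
      obtain ⟨i, hi, rfl⟩ := htops K hK
      exact hmeas i (hs hi)
    _ ≤ q * μ (⋃ i ∈ s, J i) := by
      gcongr
      simp only [Set.iUnion_subset_iff]
      intro K hK
      obtain ⟨i, hi, rfl⟩ := htops K hK
      exact Set.subset_biUnion_of_mem (u := J) hi

lemma two_mul_measure_biUnion_le (hG : IsLaminar G J) (hmeas : ∀ i ∈ G, MeasurableSet (J i))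
    {q : ℕ} (hq : q ≠ 0) (hpack : CarlesonPacking μ G J q) (m : ℕ) :
    2 * μ (⋃ i ∈ deepMembers G J (m + 2 * q), J i) ≤ μ (⋃ i ∈ deepMembers G J m, J i) := by
  rw [← ENNReal.mul_le_mul_iff_right (a := q) (by simpa) (ENNReal.natCast_ne_top q),
    ← mul_assoc]
  calc (q * 2 : ℝ≥0∞) * μ (⋃ i ∈ deepMembers G J (m + 2 * q), J i)
      = ((2 * q : ℕ) : ℝ≥0∞) * μ (⋃ i ∈ deepMembers G J (m + 2 * q), J i) := by
        push_cast; ring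
    _ ≤ ∑ i ∈ deepMembers G J m, μ (J i) :=
        hG.natCast_mul_measure_biUnion_le_sum hmeas m (2 * q)
    _ ≤ q * μ (⋃ i ∈ deepMembers G J m, J i) :=
        hG.sum_measure_le_mul_measure_biUnion hmeas hpack (deepMembers_subset m)

lemma two_pow_mul_measure_biUnion_le (hG : IsLaminar G J) (hmeas : ∀ i ∈ G, MeasurableSet (J i))
    {q : ℕ} (hq : q ≠ 0) (hpack : CarlesonPacking μ G J q) (m n : ℕ) :
    2 ^ n * μ (⋃ i ∈ deepMembers G J (m + n * (2 * q)), J i) ≤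
      μ (⋃ i ∈ deepMembers G J m, J i) := by
  induction n with
  | zero => simp
  | succ n ih =>
    calc 2 ^ (n + 1) * μ (⋃ i ∈ deepMembers G J (m + (n + 1) * (2 * q)), J i)
        = 2 ^ n * (2 * μ (⋃ i ∈ deepMembers G J (m + n * (2 * q) + 2 * q), J i)) := by
          rw [pow_succ, mul_assoc, add_mul, one_mul, add_assoc]
      _ ≤ 2 ^ n * μ (⋃ i ∈ deepMembers G J (m + n * (2 * q)), J i) := by
          gcongr; exact hG.two_mul_measure_biUnion_le hmeas hq hpack _
      _ ≤ μ (⋃ i ∈ deepMembers G J m, J i) := ih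

lemma two_pow_mul_sum_measure_le (hG : IsLaminar G J) (hmeas : ∀ i ∈ G, MeasurableSet (J i))
    {q : ℕ} (hq : q ≠ 0) (hpack : CarlesonPacking μ G J q) (n : ℕ) :
    2 ^ n * ∑ i ∈ deepMembers G J (1 + n * (2 * q)), μ (J i) ≤ q * μ (⋃ i ∈ G, J i) :=
  calc 2 ^ n * ∑ i ∈ deepMembers G J (1 + n * (2 * q)), μ (J i)
      ≤ 2 ^ n * (q * μ (⋃ i ∈ deepMembers G J (1 + n * (2 * q)), J i)) := by
        gcongr; exact hG.sum_measure_le_mul_measure_biUnion hmeas hpack (deepMembers_subset _)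
    _ = q * (2 ^ n * μ (⋃ i ∈ deepMembers G J (1 + n * (2 * q)), J i)) := by ring
    _ ≤ q * μ (⋃ i ∈ G, J i) := by
        gcongr
        simpa only [deepMembers_one] using hG.two_pow_mul_measure_biUnion_le hmeas hq hpack 1 n

lemma two_pow_mul_sum_toReal_le (hG : IsLaminar G J) (hmeas : ∀ i ∈ G, MeasurableSet (J i))
    (hfin : ∀ i ∈ G, μ (J i) ≠ ∞) {q : ℕ} (hq : q ≠ 0) (hpack : CarlesonPacking μ G J q)
    (n : ℕ) :
    2 ^ n * ∑ i ∈ deepMembers G J (1 + n * (2 * q)), (μ (J i)).toReal ≤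
      q * (μ (⋃ i ∈ G, J i)).toReal := by
  have hU : μ (⋃ i ∈ G, J i) ≠ ∞ :=
    (measure_biUnion_lt_top G.finite_toSet fun i hi => (hfin i hi).lt_top).ne
  have := ENNReal.toReal_mono (by finiteness) (hG.two_pow_mul_sum_measure_le hmeas hq hpack n)
  simpa only [ENNReal.toReal_mul, ENNReal.toReal_pow, ENNReal.toReal_ofNat, ENNReal.toReal_natCast,
    ENNReal.toReal_sum fun i hi => hfin i (deepMembers_subset _ hi)] using this

end IsLaminar

end Laminar

section Intervals

variable {ι : Type*} {G : Finset ι} {J : ι → Set ℝ}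

lemma measurableSet_of_forall_eq_Ico
    (hIco : ∀ i ∈ G, ∃ x y : ℝ, x < y ∧ J i = Set.Ico x y) :
    ∀ i ∈ G, MeasurableSet (J i) := fun i hi => by
  obtain ⟨x, y, -, hJ⟩ := hIco i hi
  exact hJ ▸ measurableSet_Ico

lemma volume_ne_top_of_forall_eq_Ico
    (hIco : ∀ i ∈ G, ∃ x y : ℝ, x < y ∧ J i = Set.Ico x y) :
    ∀ i ∈ G, volume (J i) ≠ ∞ := fun i hi => by
  obtain ⟨x, y, -, hJ⟩ := hIco i hi
  simp [hJ]

lemma carlesonPacking_natCeil {Q : ℝ}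
    (hIco : ∀ i ∈ G, ∃ x y : ℝ, x < y ∧ J i = Set.Ico x y)
    (hpack : ∀ x y : ℝ, x < y →
      ∑ i ∈ G.filter (fun i => J i ⊆ Set.Ico x y), (volume (J i)).toReal ≤ Q * (y - x)) :
    CarlesonPacking volume G J ⌈Q⌉₊ := fun i hi => by
  obtain ⟨x, y, hxy, hJ⟩ := hIco i hi
  calc ∑ i' ∈ G with J i' ⊆ J i, volume (J i')
      = ENNReal.ofReal (∑ i' ∈ G with J i' ⊆ J i, (volume (J i')).toReal) := by
        rw [ENNReal.ofReal_sum_of_nonneg fun _ _ => ENNReal.toReal_nonneg]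
        exact sum_congr rfl fun i' hi' => (ENNReal.ofReal_toReal
          (volume_ne_top_of_forall_eq_Ico hIco i' (mem_filter.1 hi').1)).symm
    _ ≤ ENNReal.ofReal (Q * (y - x)) := ENNReal.ofReal_le_ofReal (hJ ▸ hpack x y hxy)
    _ ≤ ENNReal.ofReal (⌈Q⌉₊ * (y - x)) := by
        gcongr
        exact Nat.le_ceil Q
    _ = ⌈Q⌉₊ * volume (J i) := by
        rw [ENNReal.ofReal_mul (Nat.cast_nonneg _), ENNReal.ofReal_natCast, hJ, Real.volume_Ico]

end Intervals

lemma natCeil_mul_le {C a : ℝ} (hC : 0 ≤ C) (ha : 1 ≤ a) :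
    (⌈C * a⌉₊ : ℝ) ≤ (C + 1) * a := by
  have := Nat.ceil_lt_add_one (by positivity : 0 ≤ C * a)
  nlinarith

lemma cast_one_add_mul_le {C₁ C₂ : ℝ} (hC₁ : 0 ≤ C₁) (hC₂ : 0 ≤ C₂) {k q : ℕ}
    (hq : (q : ℝ) ≤ (C₂ + 1) * 2 ^ (3 * k)) :
    ((1 + 110 * k * (2 * q) : ℕ) : ℝ) ≤ (C₁ + 221) * (C₂ + 1) * 2 ^ (4 * k) := by
  have hk : (k : ℝ) * 2 ^ (3 * k) ≤ 2 ^ (4 * k) := by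
    rw [show 4 * k = k + 3 * k by ring, pow_add]
    gcongr
    exact_mod_cast Nat.lt_two_pow_self.le
  have h1 : (1 : ℝ) ≤ 2 ^ (4 * k) := one_le_pow₀ one_le_two
  push_cast
  nlinarith [mul_le_mul_of_nonneg_left hq k.cast_nonneg,
    mul_le_mul_of_nonneg_left hk (by positivity : (0 : ℝ) ≤ C₂ + 1),
    mul_nonneg (mul_nonneg hC₁ (by positivity : (0 : ℝ) ≤ C₂ + 1))
      (by positivity : (0 : ℝ) ≤ 2 ^ (4 * k))]

lemma le_mul_inv_two_pow_of_two_pow_mul_le {S C : ℝ} (hC : 0 ≤ C) {k : ℕ}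
    (h : 2 ^ (110 * k) * S ≤ C * 2 ^ (6 * k)) : S ≤ C * ((2 : ℝ) ^ (100 * k))⁻¹ :=
  calc S ≤ C * 2 ^ (6 * k) / 2 ^ (110 * k) := by
        rw [le_div_iff₀ (by positivity)]
        linarith
    _ = C * ((2 : ℝ) ^ (104 * k))⁻¹ := by
        rw [show 110 * k = 6 * k + 104 * k by ring, pow_add]
        field_simp
    _ ≤ C * ((2 : ℝ) ^ (100 * k))⁻¹ := by
        gcongr
        · norm_num
        · omega

/-- A finite family `G` of grid intervals whose union has measure
`≤ C₁2^{3k}` and which satisfies the Carleson packing condition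
`Σ_{J_T ⊆ I}|J_T| ≤ C₂2^{3k}|I|` for every interval `I`, splits as
`G = G' ∪ G''` with `‖N_{G'}‖_∞ ≲ 2^{4k}` and `‖N_{G''}‖₁ ≲ 2^{−100k}`. -/
theorem stmt8 (C₁ C₂ : ℝ) (hC₁ : 0 < C₁) (hC₂ : 0 < C₂) :
    ∃ C₃ > 0, ∀ (k : ℕ), 1 ≤ k → ∀ (ι : Type) (G : Finset ι) (J : ι → Set ℝ),
      (∀ i ∈ G, ∃ x y : ℝ, x < y ∧ J i = Set.Ico x y) →
      (∀ i ∈ G, ∀ i' ∈ G, J i ⊆ J i' ∨ J i' ⊆ J i ∨ Disjoint (J i) (J i')) →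
      (volume (⋃ i ∈ G, J i)).toReal ≤ C₁ * 2 ^ (3 * k) →
      (∀ x y : ℝ, x < y →
        (∑ i ∈ G.filter (fun i => J i ⊆ Set.Ico x y), (volume (J i)).toReal) ≤
          C₂ * 2 ^ (3 * k) * (y - x)) →
      ∃ G' G'' : Finset ι, G' ∪ G'' = G ∧ Disjoint G' G'' ∧
        (∀ x : ℝ, (∑ i ∈ G', Set.indicator (J i) (fun _ => (1:ℝ)) x) ≤
          C₃ * 2 ^ (4 * k)) ∧
        (∑ i ∈ G'', (volume (J i)).toReal) ≤ C₃ * ((2:ℝ) ^ (100 * k))⁻¹ := by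
  refine ⟨(C₁ + 221) * (C₂ + 1), by positivity,
    fun k _ ι G J hIco hnest hunion hpack => ?_⟩
  have hG : IsLaminar G J := hnest
  set q := ⌈C₂ * 2 ^ (3 * k)⌉₊
  set M := 1 + 110 * k * (2 * q)
  have hq : (q : ℝ) ≤ (C₂ + 1) * 2 ^ (3 * k) :=
    natCeil_mul_le hC₂.le (one_le_pow₀ one_le_two)
  refine ⟨{i ∈ G | ¬ M ≤ depth G J i}, deepMembers G J M,
    (union_comm _ _).trans (filter_union_filter_not_eq _ _),
    (disjoint_filter_filter_not _ _ _).symm,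
    fun x => (hG.sum_indicator_le M x).trans (cast_one_add_mul_le hC₁.le hC₂.le hq), ?_⟩
  refine le_mul_inv_two_pow_of_two_pow_mul_le (by positivity) ?_
  calc 2 ^ (110 * k) * ∑ i ∈ deepMembers G J M, (volume (J i)).toReal
      ≤ q * (volume (⋃ i ∈ G, J i)).toReal :=
        hG.two_pow_mul_sum_toReal_le (measurableSet_of_forall_eq_Ico hIco)
          (volume_ne_top_of_forall_eq_Ico hIco) (by positivity) (carlesonPacking_natCeil hIco hpack)
          (110 * k)
    _ ≤ (C₂ + 1) * 2 ^ (3 * k) * (C₁ * 2 ^ (3 * k)) := by gcongr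
    _ ≤ (C₁ + 221) * (C₂ + 1) * 2 ^ (6 * k) := by
        rw [show 6 * k = 3 * k + 3 * k by ring, pow_add]
        nlinarith [(by positivity : (0 : ℝ) < (C₂ + 1) * 2 ^ (3 * k) * 2 ^ (3 * k))]
end

section
/- Let S be a tree of tritiles of type j ∈ {1,2,3}: for each tritile s ∈ S and each k ≠ j, the coefficients a_{s,k} := ⟨f_k, φ_{s_k}⟩ satisfy the ℓ² bound (Σ_{s∈S} |a_{s,k}|²)^{1/2} ≤ σ_k |I_T|^{1/2}, while sup_{s∈S} |a_{s,j}|/|I_s|^{1/2} ≤ σ_j. Then Σ_{s∈S} |I_s|^{−1/2} ∏_{k=1}^{3} |a_{s,k}| ≤ σ₁σ₂σ₃ |I_T|. -/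
/-!
Hölder's inequality in `ℓ^∞ × ℓ² × ℓ²`: the factor `|a_{s,j}| / |I_s|^{1/2}` is bounded by `σ_j`
pointwise, and Cauchy–Schwarz bounds the sum of the two remaining factors by
`σ_k |I_T|^{1/2} · σ_k' |I_T|^{1/2}`.
-/

open Finset

theorem Finset.sum_abs_mul_abs_mul_abs_le {ι : Type*} (S : Finset ι) (x y z : ι → ℝ) {A : ℝ}
    (hA : 0 ≤ A) (hx : ∀ s ∈ S, |x s| ≤ A) :
    ∑ s ∈ S, |x s| * |y s| * |z s| ≤
      A * √(∑ s ∈ S, y s ^ 2) * √(∑ s ∈ S, z s ^ 2) := by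
  have cauchy_schwarz := Real.sum_mul_le_sqrt_mul_sqrt S (fun s => |y s|) (fun s => |z s|)
  simp only [sq_abs] at cauchy_schwarz
  calc ∑ s ∈ S, |x s| * |y s| * |z s| ≤ ∑ s ∈ S, A * (|y s| * |z s|) := by
        refine sum_le_sum fun s hs => ?_
        rw [← mul_assoc]
        gcongr
        exact hx s hs
    _ = A * ∑ s ∈ S, |y s| * |z s| := (mul_sum ..).symm
    _ ≤ A * √(∑ s ∈ S, y s ^ 2) * √(∑ s ∈ S, z s ^ 2) := by
        rw [mul_assoc]
        exact mul_le_mul_of_nonneg_left cauchy_schwarz hA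

theorem stmt14_general (ι : Type) (S : Finset ι) (a : Fin 3 → ι → ℝ) (σ : Fin 3 → ℝ)
    (lenI : ι → ℝ) (lenT : ℝ) (j : Fin 3)
    (hlenT : 0 ≤ lenT) (hσ : ∀ k, 0 ≤ σ k)
    (hl2 : ∀ k, k ≠ j →
      Real.sqrt (∑ s ∈ S, (a k s) ^ 2) ≤ σ k * Real.sqrt lenT)
    (hinf : ∀ s ∈ S, |a j s| ≤ σ j * Real.sqrt (lenI s)) :
    ∑ s ∈ S, (Real.sqrt (lenI s))⁻¹ * ∏ k : Fin 3, |a k s| ≤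
      σ 0 * σ 1 * σ 2 * lenT := by
  -- `j.succAbove 0` and `j.succAbove 1` are the two indices `k ≠ j`.
  set k₀ := j.succAbove 0
  set k₁ := j.succAbove 1
  have hsplit : ∀ s, (√(lenI s))⁻¹ * ∏ k, |a k s| =
      |a j s / √(lenI s)| * |a k₀ s| * |a k₁ s| := fun s => by
    rw [Fin.prod_univ_succAbove _ j, Fin.prod_univ_two, abs_div, abs_of_nonneg (Real.sqrt_nonneg _)]
    ring
  have hσ_split : σ 0 * σ 1 * σ 2 = σ j * σ k₀ * σ k₁ := by
    rw [← Fin.prod_univ_three, Fin.prod_univ_succAbove _ j, Fin.prod_univ_two, mul_assoc]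
  have hsup : ∀ s ∈ S, |a j s / √(lenI s)| ≤ σ j := fun s hs => by
    rw [abs_div, abs_of_nonneg (Real.sqrt_nonneg _)]
    exact div_le_of_le_mul₀ (Real.sqrt_nonneg _) (hσ j) (hinf s hs)
  calc ∑ s ∈ S, (√(lenI s))⁻¹ * ∏ k, |a k s|
        = ∑ s ∈ S, |a j s / √(lenI s)| * |a k₀ s| * |a k₁ s| := sum_congr rfl fun s _ => hsplit s
    _ ≤ σ j * √(∑ s ∈ S, a k₀ s ^ 2) * √(∑ s ∈ S, a k₁ s ^ 2) :=
        S.sum_abs_mul_abs_mul_abs_le _ _ _ (hσ j) hsup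
    _ ≤ σ j * (σ k₀ * √lenT) * (σ k₁ * √lenT) := by
        have := hσ j
        have := hσ k₀
        gcongr
        exacts [hl2 k₀ (Fin.succAbove_ne j 0), hl2 k₁ (Fin.succAbove_ne j 1)]
    _ = σ 0 * σ 1 * σ 2 * lenT := by
        rw [hσ_split]
        linear_combination σ j * σ k₀ * σ k₁ * Real.mul_self_sqrt hlenT

/-- the single-tree Hölder estimate. If along a tree `S` of type
`j` the coefficients satisfy `(Σ_{s∈S}|a_{s,k}|²)^{1/2} ≤ σ_k |I_T|^{1/2}` for
`k ≠ j` and `sup_s |a_{s,j}|/|I_s|^{1/2} ≤ σ_j`, then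
`Σ_{s∈S}|I_s|^{−1/2}∏_k|a_{s,k}| ≤ σ₁σ₂σ₃|I_T|`. -/
theorem stmt14 (ι : Type) (S : Finset ι) (a : Fin 3 → ι → ℝ) (σ : Fin 3 → ℝ)
    (lenI : ι → ℝ) (lenT : ℝ) (j : Fin 3)
    (hlen : ∀ s ∈ S, 0 < lenI s) (hlenT : 0 ≤ lenT) (hσ : ∀ k, 0 ≤ σ k)
    (hl2 : ∀ k, k ≠ j →
      Real.sqrt (∑ s ∈ S, (a k s) ^ 2) ≤ σ k * Real.sqrt lenT)
    (hinf : ∀ s ∈ S, |a j s| ≤ σ j * Real.sqrt (lenI s)) :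
    ∑ s ∈ S, (Real.sqrt (lenI s))⁻¹ * ∏ k : Fin 3, |a k s| ≤
      σ 0 * σ 1 * σ 2 * lenT :=
  stmt14_general ι S a σ lenI lenT j hlenT hσ hl2 hinf
end

section
/- For 3/4 < α₁ < 1 and constants C ≥ 1, with u(t) = (t+e)(log(t+e))², the series Σ_{k≥0} (u(Ck)² log u(Ck))^{α₁ − 1/2} · 2^{−2(1−α₁)k} is bounded by C' · (1/(1−α₁)) · ((1/(1−α₁)))_*^{2α₁−1}, where (s)_* = (1+s)(log(e+s))³ and C' depends only on C. -/
/-- The starred quantity `(s)_* = (1+s)(log(e+s))³`. -/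
noncomputable def ostar (s : ℝ) : ℝ := (1 + s) * Real.log (Real.exp 1 + s) ^ (3 : ℕ)

/-- `u(t) = (t+e)(log(t+e))²`. -/
noncomputable def uu (t : ℝ) : ℝ := (t + Real.exp 1) * Real.log (t + Real.exp 1) ^ (2 : ℕ)

private lemma self_le_exp' (x : ℝ) : x ≤ Real.exp x := by
  nlinarith [Real.add_one_le_exp x]

private lemma pow4_le_exp' (x : ℝ) (hx : 0 ≤ x) : x ^ 4 ≤ 256 * Real.exp x := by
  have h : x / 4 ≤ Real.exp (x / 4) := self_le_exp' _
  have h2 : (x/4)^4 ≤ (Real.exp (x/4))^4 := pow_le_pow_left₀ (by positivity) h 4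
  have h3 : (Real.exp (x/4))^4 = Real.exp x := by
    rw [← Real.exp_nat_mul]; congr 1; push_cast; ring
  nlinarith [h2, h3]

private lemma cube_add_le' (a b : ℝ) (ha : 0 ≤ a) (hb : 0 ≤ b) :
    (a + b)^3 ≤ 8*a^3 + 8*b^3 := by
  nlinarith [mul_nonneg (sq_nonneg (a-b)) (by linarith : (0:ℝ) ≤ 2*a+b),
    mul_nonneg (sq_nonneg (a-b)) (by linarith : (0:ℝ) ≤ a+2*b),
    pow_nonneg ha 3, pow_nonneg hb 3]

private lemma uu_facts' (t : ℝ) (ht : 0 ≤ t) :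
    1 ≤ uu t ^ 2 * Real.log (uu t) ∧
    uu t ^ 2 * Real.log (uu t) ≤ (2 * (t + Real.exp 1) * Real.log (t + Real.exp 1) ^ 3) ^ 2 := by
  have hE : (2:ℝ) < Real.exp 1 := by nlinarith [Real.exp_one_gt_d9]
  set w := t + Real.exp 1 with hwdef
  have hw : Real.exp 1 ≤ w := by simp [hwdef]; linarith
  have hw0 : 0 < w := lt_trans (by norm_num) (lt_of_lt_of_le hE hw)
  set L := Real.log w with hLdef
  have hL1 : 1 ≤ L := (Real.le_log_iff_exp_le hw0).2 hw
  have hL0 : (0:ℝ) ≤ L := by linarith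
  have huu : uu t = w * L ^ 2 := rfl
  have hlogu : Real.log (uu t) = L + 2 * Real.log L := by
    rw [huu, Real.log_mul hw0.ne' (pow_ne_zero 2 (by linarith : L ≠ 0)), Real.log_pow]
    push_cast; ring
  have hll : 0 ≤ Real.log L := Real.log_nonneg hL1
  have hlu : Real.log L ≤ L - 1 := Real.log_le_sub_one_of_pos (by linarith)
  constructor
  · rw [hlogu, huu]
    have h1 : 1 ≤ w * L^2 := by nlinarith
    nlinarith [h1, hll]
  · rw [hlogu, huu]
    have hlog3 : L + 2 * Real.log L ≤ 3 * L := by linarith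
    calc (w * L^2)^2 * (L + 2*Real.log L) ≤ (w * L^2)^2 * (3*L) :=
          mul_le_mul_of_nonneg_left hlog3 (sq_nonneg _)
      _ ≤ (2*w*L^3)^2 := by
          nlinarith [mul_nonneg (mul_nonneg (sq_nonneg w) (pow_nonneg hL0 5))
            (by linarith : (0:ℝ) ≤ 4*L - 3)]

set_option maxHeartbeats 1000000 in
/-- for `3/4 < α₁ < 1` and `C ≥ 1`,
`Σ_{k≥0} (u(Ck)² log u(Ck))^{α₁−1/2} 2^{−2(1−α₁)k}
  ≤ C' (1/(1−α₁)) ((1/(1−α₁)))_*^{2α₁−1}`, with `C' = C'(C)`. -/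
theorem stmt16 (C : ℝ) (hC : 1 ≤ C) :
    ∃ C' > 0, ∀ α₁ : ℝ, 3/4 < α₁ → α₁ < 1 →
      (∑' k : ℕ,
          (uu (C * k) ^ 2 * Real.log (uu (C * k))) ^ (α₁ - 1/2) *
            (2:ℝ) ^ (-2 * (1 - α₁) * (k : ℝ))) ≤
        C' * (1 / (1 - α₁)) * ostar (1 / (1 - α₁)) ^ (2 * α₁ - 1) := by
  have hE2 : (2:ℝ) < Real.exp 1 := by nlinarith [Real.exp_one_gt_d9]
  have hE3 : Real.exp 1 < 3 := by nlinarith [Real.exp_one_lt_d9]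
  have hE0 : (0:ℝ) < Real.exp 1 := Real.exp_pos 1
  have hlogC : 0 ≤ Real.log C := Real.log_nonneg hC
  have hC0 : (0:ℝ) < C := by linarith
  set c : ℝ := 2 + Real.log C with hcdef
  clear_value c
  have hc2 : 2 ≤ c := by rw [hcdef]; linarith
  refine ⟨1000000000000 * C * Real.exp 1 * c^3,
    mul_pos (mul_pos (by linarith : (0:ℝ) < 1000000000000 * C) hE0)
      (pow_pos (by linarith : (0:ℝ) < c) 3), ?_⟩
  intro α₁ hα₁ hα₂
  set ε : ℝ := 1 - α₁ with hεdef
  clear_value ε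
  have hε0 : (0:ℝ) < ε := by rw [hεdef]; linarith
  have hε4 : ε < 1/4 := by rw [hεdef]; linarith
  set l : ℝ := Real.log 2 with hldef
  clear_value l
  have hl1 : 1/2 < l := by rw [hldef]; nlinarith [Real.log_two_gt_d9]
  have hl2 : l < 7/10 := by rw [hldef]; nlinarith [Real.log_two_lt_d9]
  have hl0 : (0:ℝ) < l := by linarith
  have hεinv : (4:ℝ) ≤ ε⁻¹ := by
    nlinarith only [mul_inv_cancel₀ hε0.ne',
      mul_pos (by linarith : (0:ℝ) < 1/4 - ε) (inv_pos.2 hε0)]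
  have h1ε0 : (0:ℝ) < 1/ε := one_div_pos.2 hε0
  have h1ε4 : (4:ℝ) ≤ 1/ε := by rw [one_div]; exact hεinv
  set A : ℝ := Real.log (Real.exp 1 + 1/ε) with hAdef
  clear_value A
  have hA1 : 1 ≤ A := by
    rw [hAdef]; exact (Real.le_log_iff_exp_le (by linarith)).2 (by linarith)
  have hA0 : (0:ℝ) ≤ A := by linarith
  have hA3 : 1 ≤ A^3 := by
    nlinarith only [mul_nonneg (by linarith : (0:ℝ) ≤ A - 1)
      (by nlinarith only [sq_nonneg A, hA1] : (0:ℝ) ≤ A^2 + A + 1), hA1]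
  set s : ℝ := (2:ℝ) ^ (-ε) with hsdef
  clear_value s
  have hs0 : 0 < s := by rw [hsdef]; exact Real.rpow_pos_of_pos two_pos _
  have hs1 : s < 1 := by
    rw [hsdef]; exact Real.rpow_lt_one_of_one_lt_of_neg one_lt_two (by linarith)
  have hAE0 : (0:ℝ) ≤ A + Real.exp 1 := by linarith
  have hAE3 : (3:ℝ) ≤ A + Real.exp 1 := by linarith
  set M : ℝ := 140000 * C * Real.exp 1 * c^3 * ε⁻¹ * (A + Real.exp 1)^3 with hMdef
  clear_value M
  have hc30 : (0:ℝ) ≤ c^3 := pow_nonneg (by linarith) 3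
  have hεi0 : (0:ℝ) ≤ ε⁻¹ := by linarith
  have hM0 : 0 ≤ M := by
    rw [hMdef]
    exact mul_nonneg (mul_nonneg (mul_nonneg (mul_nonneg
      (by linarith : (0:ℝ) ≤ 140000 * C) hE0.le) hc30) hεi0) (pow_nonneg hAE0 3)
  have h2CEc : (0:ℝ) ≤ 2*C*Real.exp 1*c^3 :=
    mul_nonneg (mul_nonneg (by linarith) hE0.le) hc30
  -- pointwise bound
  have key : ∀ k : ℕ,
      (uu (C * k) ^ 2 * Real.log (uu (C * k))) ^ (α₁ - 1/2) *
        (2:ℝ) ^ (-2 * ε * (k : ℝ)) ≤ M * s ^ k := by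
    intro k
    have hk0 : (0:ℝ) ≤ (k:ℝ) := Nat.cast_nonneg k
    have ht0 : 0 ≤ C * (k:ℝ) := mul_nonneg hC0.le hk0
    obtain ⟨hB1, hBub⟩ := uu_facts' (C*(k:ℝ)) ht0
    set w : ℝ := C*(k:ℝ) + Real.exp 1 with hwdef
    set L : ℝ := Real.log w with hLdef
    clear_value w L
    have hwE : Real.exp 1 ≤ w := by rw [hwdef]; linarith
    have hw0 : 0 < w := by linarith
    have hL1 : 1 ≤ L := by
      rw [hLdef]; exact (Real.le_log_iff_exp_le hw0).2 hwE
    have hL0 : (0:ℝ) ≤ L := by linarith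
    have hεk0 : (0:ℝ) ≤ ε*(k:ℝ) := mul_nonneg hε0.le hk0
    have hwL3 : (0:ℝ) ≤ 2*w*L^3 :=
      mul_nonneg (mul_nonneg (by norm_num) hw0.le) (pow_nonneg hL0 3)
    have hstep1 : (uu (C*(k:ℝ)) ^ 2 * Real.log (uu (C*(k:ℝ)))) ^ (α₁ - 1/2) ≤ 2*w*L^3 := by
      have e1 : (uu (C*(k:ℝ)) ^ 2 * Real.log (uu (C*(k:ℝ)))) ^ (α₁ - 1/2)
          ≤ (uu (C*(k:ℝ)) ^ 2 * Real.log (uu (C*(k:ℝ)))) ^ ((1:ℝ)/2) :=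
        Real.rpow_le_rpow_of_exponent_le hB1 (by linarith)
      have e2 : (uu (C*(k:ℝ)) ^ 2 * Real.log (uu (C*(k:ℝ)))) ^ ((1:ℝ)/2)
          ≤ ((2*w*L^3)^2 : ℝ) ^ ((1:ℝ)/2) :=
        Real.rpow_le_rpow (by linarith) hBub (by norm_num)
      have e3 : ((2*w*L^3)^2 : ℝ) ^ ((1:ℝ)/2) = 2*w*L^3 := by
        rw [← Real.rpow_natCast (2*w*L^3) 2, ← Real.rpow_mul hwL3]
        norm_num
      calc (uu (C*(k:ℝ)) ^ 2 * Real.log (uu (C*(k:ℝ)))) ^ (α₁ - 1/2) ≤ _ := e1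
        _ ≤ _ := e2
        _ = _ := e3
    set G : ℝ := Real.log (Real.exp 1 + (k:ℝ)) with hGdef
    clear_value G
    have hG1 : 1 ≤ G := by
      rw [hGdef]; exact (Real.le_log_iff_exp_le (by linarith)).2 (by linarith)
    have hG0 : (0:ℝ) ≤ G := by linarith
    have hwub : w ≤ C * Real.exp 1 * ((k:ℝ)+1) := by
      rw [hwdef]
      nlinarith only [mul_nonneg (mul_nonneg hC0.le hk0) (by linarith : (0:ℝ) ≤ Real.exp 1 - 1),
        mul_nonneg (by linarith : (0:ℝ) ≤ C - 1) hE0.le]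
    have hLG : L ≤ c * G := by
      have h1 : w ≤ C * ((k:ℝ) + Real.exp 1) := by
        rw [hwdef]
        nlinarith only [mul_nonneg (by linarith : (0:ℝ) ≤ C - 1) hE0.le]
      have h2 : L ≤ Real.log (C * ((k:ℝ) + Real.exp 1)) := by
        rw [hLdef]; exact Real.log_le_log hw0 h1
      rw [Real.log_mul hC0.ne' (by positivity : (0:ℝ) < (k:ℝ) + Real.exp 1).ne'] at h2
      have h3 : Real.log ((k:ℝ) + Real.exp 1) = G := by rw [hGdef, add_comm]
      rw [h3] at h2
      rw [hcdef]
      nlinarith only [mul_nonneg hlogC (by linarith : (0:ℝ) ≤ G - 1), h2, hG1]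
    have hEεk0 : (0:ℝ) < Real.exp 1 + ε*(k:ℝ) := by linarith
    have hprod : Real.exp 1 + (k:ℝ) ≤ (Real.exp 1 + 1/ε) * (Real.exp 1 + ε*(k:ℝ)) := by
      have hik : (1/ε) * (ε*(k:ℝ)) = (k:ℝ) := by field_simp
      nlinarith only [hik, mul_nonneg hE0.le hεk0, mul_nonneg hE0.le h1ε0.le,
        mul_nonneg hE0.le (by linarith : (0:ℝ) ≤ Real.exp 1 - 1)]
    have hGub : G ≤ (A + Real.exp 1) + ε*(k:ℝ) := by
      have h1 : G ≤ Real.log ((Real.exp 1 + 1/ε) * (Real.exp 1 + ε*(k:ℝ))) := by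
        rw [hGdef]; exact Real.log_le_log (by linarith) hprod
      rw [Real.log_mul (by linarith : (Real.exp 1 + 1/ε) ≠ 0) hEεk0.ne'] at h1
      rw [← hAdef] at h1
      have h2 : Real.log (Real.exp 1 + ε*(k:ℝ)) ≤ Real.exp 1 + ε*(k:ℝ) := by
        linarith only [Real.log_le_sub_one_of_pos hEεk0]
      linarith
    -- rpow decomposition
    set r2 : ℝ := (2:ℝ) ^ (-(ε*(k:ℝ))) with hr2def
    clear_value r2
    have hr20 : 0 < r2 := by rw [hr2def]; exact Real.rpow_pos_of_pos two_pos _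
    have hsk : s ^ k = (2:ℝ) ^ (-(ε*(k:ℝ))) := by
      rw [hsdef, ← Real.rpow_natCast ((2:ℝ)^(-ε)) k,
        ← Real.rpow_mul (by norm_num : (0:ℝ) ≤ 2)]
      congr 1; ring
    have hR : (2:ℝ) ^ (-2 * ε * (k:ℝ)) = r2 * s ^ k := by
      rw [hsk, hr2def, ← Real.rpow_add two_pos]
      congr 1; ring
    have hrs : (0:ℝ) ≤ r2 * s ^ k := mul_nonneg hr20.le (pow_nonneg hs0.le k)
    have hexpk : Real.exp (ε*l*(k:ℝ)) = (2:ℝ)^(ε*(k:ℝ)) := by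
      rw [Real.rpow_def_of_pos two_pos]; congr 1; rw [hldef]; ring
    have hexp1 : Real.exp (ε*l) ≤ 2 := by
      have h : Real.exp (ε*l) = (2:ℝ)^ε := by
        rw [Real.rpow_def_of_pos two_pos]; congr 1; rw [hldef]; ring
      rw [h]
      calc (2:ℝ)^ε ≤ (2:ℝ)^(1:ℝ) :=
            Real.rpow_le_rpow_of_exponent_le one_le_two (by linarith)
        _ = 2 := Real.rpow_one 2
    have hcancel : (2:ℝ)^(ε*(k:ℝ)) * r2 = 1 := by
      rw [hr2def, ← Real.rpow_add two_pos, add_neg_cancel, Real.rpow_zero]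
    have hm1 : ((k:ℝ)+1) * r2 ≤ 4*ε⁻¹ := by
      have hy : ε*l*((k:ℝ)+1) ≤ Real.exp (ε*l*((k:ℝ)+1)) := self_le_exp' _
      have hsplit : Real.exp (ε*l*((k:ℝ)+1)) = Real.exp (ε*l*(k:ℝ)) * Real.exp (ε*l) := by
        rw [← Real.exp_add]; congr 1; ring
      have h1 : ε*l*((k:ℝ)+1) ≤ (2:ℝ)^(ε*(k:ℝ)) * 2 := by
        rw [hsplit, hexpk] at hy
        calc ε*l*((k:ℝ)+1) ≤ (2:ℝ)^(ε*(k:ℝ)) * Real.exp (ε*l) := hy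
          _ ≤ (2:ℝ)^(ε*(k:ℝ)) * 2 :=
              mul_le_mul_of_nonneg_left hexp1 (Real.rpow_pos_of_pos two_pos _).le
      have h2 : ε*l*(((k:ℝ)+1) * r2) ≤ 2 := by
        calc ε*l*(((k:ℝ)+1)*r2) = (ε*l*((k:ℝ)+1))*r2 := by ring
          _ ≤ ((2:ℝ)^(ε*(k:ℝ)) * 2)*r2 := mul_le_mul_of_nonneg_right h1 hr20.le
          _ = 2 * ((2:ℝ)^(ε*(k:ℝ)) * r2) := by ring
          _ = 2 := by rw [hcancel]; ring
      have hkr0 : 0 ≤ ((k:ℝ)+1)*r2 := mul_nonneg (by linarith) hr20.le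
      have h3 : ε*(((k:ℝ)+1)*r2) ≤ 4 := by
        nlinarith only [h2, mul_nonneg (mul_nonneg hε0.le hkr0) (by linarith : (0:ℝ) ≤ l - 1/2)]
      calc ((k:ℝ)+1)*r2 = ε⁻¹ * (ε * (((k:ℝ)+1)*r2)) := by
            rw [← mul_assoc, inv_mul_cancel₀ hε0.ne', one_mul]
        _ ≤ ε⁻¹ * 4 := mul_le_mul_of_nonneg_left h3 hεi0
        _ = 4*ε⁻¹ := by ring
    have hm4 : ((k:ℝ)+1)^4 * r2 ≤ 8192*(ε⁻¹)^4 := by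
      have hy : (ε*l*((k:ℝ)+1))^4 ≤ 256 * Real.exp (ε*l*((k:ℝ)+1)) :=
        pow4_le_exp' _ (mul_nonneg (mul_nonneg hε0.le hl0.le) (by linarith))
      have hsplit : Real.exp (ε*l*((k:ℝ)+1)) = Real.exp (ε*l*(k:ℝ)) * Real.exp (ε*l) := by
        rw [← Real.exp_add]; congr 1; ring
      have h1 : (ε*l*((k:ℝ)+1))^4 ≤ 256 * ((2:ℝ)^(ε*(k:ℝ)) * 2) := by
        rw [hsplit, hexpk] at hy
        have hh := mul_le_mul_of_nonneg_left hexp1 (Real.rpow_pos_of_pos two_pos (ε*(k:ℝ))).le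
        linarith only [hy, hh]
      have h2 : (ε*l)^4*(((k:ℝ)+1)^4 * r2) ≤ 512 := by
        calc (ε*l)^4*(((k:ℝ)+1)^4*r2) = ((ε*l*((k:ℝ)+1))^4)*r2 := by ring
          _ ≤ (256*((2:ℝ)^(ε*(k:ℝ))*2))*r2 := mul_le_mul_of_nonneg_right h1 hr20.le
          _ = 512*((2:ℝ)^(ε*(k:ℝ))*r2) := by ring
          _ = 512 := by rw [hcancel]; ring
      have hkr0 : 0 ≤ ((k:ℝ)+1)^4*r2 := mul_nonneg (pow_nonneg (by linarith) 4) hr20.le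
      have hl4 : (1/16:ℝ) ≤ l^4 := by
        have hh := pow_le_pow_left₀ (by norm_num : (0:ℝ) ≤ 1/2) hl1.le 4
        norm_num at hh; linarith only [hh]
      have h3 : ε^4*(((k:ℝ)+1)^4*r2) ≤ 8192 := by
        nlinarith only [h2, mul_nonneg (mul_nonneg (pow_nonneg hε0.le 4) hkr0)
          (by linarith : (0:ℝ) ≤ l^4 - 1/16)]
      calc ((k:ℝ)+1)^4*r2 = (ε⁻¹)^4*(ε^4*(((k:ℝ)+1)^4*r2)) := by
            rw [← mul_assoc, ← mul_pow, inv_mul_cancel₀ hε0.ne', one_pow, one_mul]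
        _ ≤ (ε⁻¹)^4*8192 := mul_le_mul_of_nonneg_left h3 (pow_nonneg hεi0 4)
        _ = 8192*(ε⁻¹)^4 := by ring
    -- assemble
    calc (uu (C * (k:ℝ)) ^ 2 * Real.log (uu (C * (k:ℝ)))) ^ (α₁ - 1/2) * (2:ℝ) ^ (-2 * ε * (k:ℝ))
        = (uu (C * (k:ℝ)) ^ 2 * Real.log (uu (C * (k:ℝ)))) ^ (α₁ - 1/2) * (r2 * s^k) := by
          rw [hR]
      _ ≤ (2*w*L^3) * (r2*s^k) := mul_le_mul_of_nonneg_right hstep1 hrs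
      _ ≤ (2*(C*Real.exp 1*((k:ℝ)+1))*(c*((A+Real.exp 1)+ε*(k:ℝ)))^3) * (r2*s^k) := by
          apply mul_le_mul_of_nonneg_right _ hrs
          have hLc : L ≤ c*((A+Real.exp 1)+ε*(k:ℝ)) := by
            calc L ≤ c*G := hLG
              _ ≤ c*((A+Real.exp 1)+ε*(k:ℝ)) :=
                  mul_le_mul_of_nonneg_left hGub (by linarith)
          have hL3 : L^3 ≤ (c*((A+Real.exp 1)+ε*(k:ℝ)))^3 := pow_le_pow_left₀ hL0 hLc 3
          have h2w : 2*w ≤ 2*(C*Real.exp 1*((k:ℝ)+1)) := by linarith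
          have hb0 : (0:ℝ) ≤ 2*(C*Real.exp 1*((k:ℝ)+1)) := by
            have hh : (0:ℝ) ≤ C*Real.exp 1*((k:ℝ)+1) :=
              mul_nonneg (mul_nonneg hC0.le hE0.le) (by linarith)
            linarith only [hh]
          exact mul_le_mul h2w hL3 (pow_nonneg hL0 3) hb0
      _ = (2*C*Real.exp 1*c^3) * ((((k:ℝ)+1) * (((A+Real.exp 1)+ε*(k:ℝ))^3) * r2) * s^k) := by
          ring
      _ ≤ (2*C*Real.exp 1*c^3) * ((((k:ℝ)+1) * (8*(A+Real.exp 1)^3 + 8*(ε*(k:ℝ))^3) * r2) * s^k) := by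
          apply mul_le_mul_of_nonneg_left _ h2CEc
          apply mul_le_mul_of_nonneg_right _ (pow_nonneg hs0.le k)
          apply mul_le_mul_of_nonneg_right _ hr20.le
          exact mul_le_mul_of_nonneg_left (cube_add_le' _ _ hAE0 hεk0) (by linarith)
      _ ≤ (2*C*Real.exp 1*c^3) * ((8*(A+Real.exp 1)^3*(((k:ℝ)+1)*r2) + 8*ε^3*(((k:ℝ)+1)^4*r2)) * s^k) := by
          apply mul_le_mul_of_nonneg_left _ h2CEc
          apply mul_le_mul_of_nonneg_right _ (pow_nonneg hs0.le k)
          have hk3 : (k:ℝ)^3*((k:ℝ)+1) ≤ ((k:ℝ)+1)^4 := by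
            have hh := mul_le_mul_of_nonneg_right
              (pow_le_pow_left₀ hk0 (by linarith : (k:ℝ) ≤ (k:ℝ)+1) 3)
              (by linarith : (0:ℝ) ≤ (k:ℝ)+1)
            nlinarith only [hh]
          nlinarith only [mul_nonneg (mul_nonneg (pow_nonneg hε0.le 3) hr20.le)
            (by linarith only [hk3] : (0:ℝ) ≤ ((k:ℝ)+1)^4 - (k:ℝ)^3*((k:ℝ)+1))]
      _ ≤ (2*C*Real.exp 1*c^3) * ((8*(A+Real.exp 1)^3*(4*ε⁻¹) + 8*ε^3*(8192*(ε⁻¹)^4)) * s^k) := by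
          apply mul_le_mul_of_nonneg_left _ h2CEc
          apply mul_le_mul_of_nonneg_right _ (pow_nonneg hs0.le k)
          have t1 := mul_le_mul_of_nonneg_left hm1
            (show (0:ℝ) ≤ 8*(A+Real.exp 1)^3 from by positivity)
          have t2 := mul_le_mul_of_nonneg_left hm4
            (show (0:ℝ) ≤ 8*ε^3 from by positivity)
          linarith only [t1, t2]
      _ = (2*C*Real.exp 1*c^3 * (8*(A+Real.exp 1)^3*(4*ε⁻¹) + 8*ε^3*(8192*(ε⁻¹)^4))) * s^k := by
          ring
      _ ≤ M * s^k := by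
          apply mul_le_mul_of_nonneg_right _ (pow_nonneg hs0.le k)
          have hsimp : 8*ε^3*(8192*(ε⁻¹)^4) = 65536*ε⁻¹ := by
            have hh : ε^3*(ε⁻¹)^3 = 1 := by
              rw [← mul_pow, mul_inv_cancel₀ hε0.ne', one_pow]
            calc 8*ε^3*(8192*(ε⁻¹)^4) = 65536*(ε^3*(ε⁻¹)^3)*ε⁻¹ := by ring
              _ = 65536*ε⁻¹ := by rw [hh]; ring
          rw [hMdef]
          rw [show 2*C*Real.exp 1*c^3 * (8*(A+Real.exp 1)^3*(4*ε⁻¹) + 8*ε^3*(8192*(ε⁻¹)^4))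
              = 2*C*Real.exp 1*c^3 * (8*(A+Real.exp 1)^3*(4*ε⁻¹) + 65536*ε⁻¹) from by rw [hsimp]]
          have hx : (27:ℝ) ≤ (A+Real.exp 1)^3 := by
            have hh := pow_le_pow_left₀ (by norm_num : (0:ℝ) ≤ 3) hAE3 3
            norm_num at hh; linarith only [hh]
          have hin : 8*(A+Real.exp 1)^3*(4*ε⁻¹) + 65536*ε⁻¹ ≤ 70000*(ε⁻¹*(A+Real.exp 1)^3) := by
            nlinarith only [mul_nonneg hεi0
              (by linarith only [hx] : (0:ℝ) ≤ 69968*(A+Real.exp 1)^3 - 65536)]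
          calc 2*C*Real.exp 1*c^3 * (8*(A+Real.exp 1)^3*(4*ε⁻¹) + 65536*ε⁻¹)
              ≤ 2*C*Real.exp 1*c^3 * (70000*(ε⁻¹*(A+Real.exp 1)^3)) :=
                mul_le_mul_of_nonneg_left hin h2CEc
            _ = 140000 * C * Real.exp 1 * c^3 * ε⁻¹ * (A + Real.exp 1)^3 := by ring
  -- summation
  have hfnn : ∀ k : ℕ, 0 ≤ (uu (C * k) ^ 2 * Real.log (uu (C * k))) ^ (α₁ - 1/2) *
      (2:ℝ) ^ (-2 * ε * (k : ℝ)) := by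
    intro k
    have h1 := (uu_facts' (C*(k:ℝ)) (mul_nonneg hC0.le (Nat.cast_nonneg k))).1
    exact mul_nonneg (Real.rpow_nonneg (by linarith) _) (Real.rpow_nonneg (by norm_num) _)
  have hgsum : Summable (fun k : ℕ => M * s^k) :=
    (summable_geometric_of_lt_one hs0.le hs1).mul_left M
  have hfsum : Summable (fun k : ℕ => (uu (C * k) ^ 2 * Real.log (uu (C * k))) ^ (α₁ - 1/2) *
      (2:ℝ) ^ (-2 * ε * (k : ℝ))) :=
    Summable.of_nonneg_of_le hfnn key hgsum
  refine le_trans (Summable.tsum_le_tsum key hfsum hgsum) ?_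
  rw [tsum_mul_left, tsum_geometric_of_lt_one hs0.le hs1]
  -- bound (1-s)⁻¹
  have hse : s = Real.exp (-(ε*l)) := by
    rw [hsdef, Real.rpow_def_of_pos two_pos]; congr 1; rw [hldef]; ring
  have hs_lb : 1 - ε*l ≤ s := by
    have h := Real.add_one_le_exp (-(ε*l))
    rw [hse]; linarith only [h]
  have hse' : s * Real.exp (ε*l) = 1 := by
    rw [hse, ← Real.exp_add]; simp
  have h1s : ε/4 ≤ 1 - s := by
    have h1 : s*(1+ε*l) ≤ 1 := by
      nlinarith only [Real.add_one_le_exp (ε*l), hs0.le, hse']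
    have h5 : ε/2 ≤ ε*l := by
      nlinarith only [hε0.le, hl1]
    have h3 : ε*l ≤ 7/40 := by
      nlinarith only [hε0.le, hl2, hε4, hl0.le]
    have h4 : (ε*l)*(ε*l) ≤ (7/40)*(ε*l) := by
      nlinarith only [h3, mul_nonneg hε0.le hl0.le]
    have h2 : (ε*l)*(1 - ε*l) ≤ s*(ε*l) := by
      nlinarith only [hs_lb, mul_nonneg hε0.le hl0.le]
    nlinarith only [h1, h2, h4, h5]
  have hs1' : (0:ℝ) < 1 - s := by linarith only [h1s, hε0]
  have hinv : (1-s)⁻¹ ≤ 4*ε⁻¹ := by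
    have h := one_div_le_one_div_of_le (by linarith only [hε0] : (0:ℝ) < ε/4) h1s
    rw [one_div, one_div] at h
    have heq : (ε/4:ℝ)⁻¹ = 4*ε⁻¹ := by
      rw [div_eq_mul_inv, mul_inv, inv_inv]; ring
    rw [heq] at h; exact h
  -- final comparison
  have hA2e : A ≤ 2*(1/ε) := by
    have h := Real.log_le_sub_one_of_pos (show (0:ℝ) < Real.exp 1 + 1/ε by linarith)
    rw [hAdef]; linarith only [h, hE3, h1ε4]
  have hP0 : (0:ℝ) < (1/ε)*A^3 := mul_pos h1ε0 (by linarith only [hA3])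
  have hPub : (1/ε)*A^3 ≤ 64*(1/ε)^4 := by
    have h1 : A^3 ≤ (2*(1/ε))^3 := pow_le_pow_left₀ hA0 hA2e 3
    nlinarith only [mul_le_mul_of_nonneg_left h1 h1ε0.le, pow_nonneg h1ε0.le 4]
  have hq0 : (0:ℝ) ≤ 1 - 2*ε := by linarith
  have h2a : 2*α₁ - 1 = 1 - 2*ε := by rw [hεdef]; ring
  have hosta : ostar (1/ε) = (1 + 1/ε)*A^3 := by
    simp only [ostar]; rw [← hAdef]
  have hPo : (1/ε)*A^3 ≤ ostar (1/ε) := by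
    rw [hosta]; nlinarith only [pow_nonneg hA0 3]
  have hP1 : (1:ℝ) ≤ (1/ε)*A^3 := by
    nlinarith only [mul_nonneg (by linarith only [h1ε4] : (0:ℝ) ≤ 1/ε - 4)
      (by linarith only [hA3] : (0:ℝ) ≤ A^3 - 1), h1ε4, hA3]
  have hsplitP : (1/ε)*A^3 ≤ 24000 * ((1/ε)*A^3) ^ (1-2*ε) := by
    have hPdecomp : (1/ε)*A^3 = ((1/ε)*A^3)^(2*ε) * ((1/ε)*A^3)^(1-2*ε) := by
      rw [← Real.rpow_add hP0, show 2*ε+(1-2*ε) = 1 by ring, Real.rpow_one]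
    have h2e : ((1/ε)*A^3)^(2*ε) ≤ 24000 := by
      have hple : ((1/ε)*A^3)^(2*ε) ≤ (64*(1/ε)^4)^(2*ε) :=
        Real.rpow_le_rpow hP0.le hPub (by linarith)
      have hmul : ((64:ℝ)*(1/ε)^4)^(2*ε) = (64:ℝ)^(2*ε) * ((1/ε)^4)^(2*ε) :=
        Real.mul_rpow (by norm_num) (pow_nonneg h1ε0.le 4)
      have h64 : ((64:ℝ))^(2*ε) ≤ 8 := by
        calc ((64:ℝ))^(2*ε) ≤ (64:ℝ)^((1:ℝ)/2) :=
              Real.rpow_le_rpow_of_exponent_le (by norm_num) (by linarith)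
          _ = 8 := by
              rw [show (64:ℝ) = 8^(2:ℕ) by norm_num, ← Real.rpow_natCast (8:ℝ) 2,
                ← Real.rpow_mul (by norm_num)]
              norm_num
      have hee : ((1/ε : ℝ)^4)^(2*ε) ≤ 3000 := by
        have he1 : ((1/ε:ℝ)^4)^(2*ε) = Real.exp (Real.log (1/ε) * (8*ε)) := by
          rw [← Real.rpow_natCast (1/ε) 4, ← Real.rpow_mul h1ε0.le,
            Real.rpow_def_of_pos h1ε0]
          congr 1; push_cast; ring
        rw [he1]
        have hlg : Real.log (1/ε) * (8*ε) ≤ 8 := by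
          have h1 : Real.log (1/ε) ≤ 1/ε - 1 := Real.log_le_sub_one_of_pos h1ε0
          have h3 : (1/ε)*ε = 1 := by field_simp
          nlinarith only [mul_le_mul_of_nonneg_right h1 (by linarith only [hε0] : (0:ℝ) ≤ 8*ε),
            h3, hε0.le]
        calc Real.exp (Real.log (1/ε)*(8*ε)) ≤ Real.exp 8 := Real.exp_le_exp.2 hlg
          _ = Real.exp 1 ^ 8 := by rw [← Real.exp_nat_mul]; norm_num
          _ ≤ (2.7182818286:ℝ)^8 :=
              pow_le_pow_left₀ (Real.exp_pos 1).le Real.exp_one_lt_d9.le 8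
          _ ≤ 3000 := by norm_num
      calc ((1/ε)*A^3)^(2*ε) ≤ _ := hple
        _ = _ := hmul
        _ ≤ 8 * 3000 := mul_le_mul h64 hee
            (Real.rpow_nonneg (pow_nonneg h1ε0.le 4) _) (by norm_num)
        _ = 24000 := by norm_num
    calc (1/ε)*A^3 = ((1/ε)*A^3)^(2*ε) * ((1/ε)*A^3)^(1-2*ε) := hPdecomp
      _ ≤ 24000*((1/ε)*A^3)^(1-2*ε) :=
          mul_le_mul_of_nonneg_right h2e (Real.rpow_nonneg hP0.le _)
  have hmonostar : ((1/ε)*A^3)^(1-2*ε) ≤ ostar (1/ε)^(1-2*ε) :=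
    Real.rpow_le_rpow hP0.le hPo hq0
  have hro : (0:ℝ) ≤ ostar (1/ε)^(1-2*ε) :=
    Real.rpow_nonneg (by linarith only [hPo, hP0.le] : (0:ℝ) ≤ ostar (1/ε)) _
  have hbase0 : (0:ℝ) ≤ C*Real.exp 1*c^3*ε⁻¹ :=
    mul_nonneg (mul_nonneg (mul_nonneg hC0.le hE0.le) hc30) hεi0
  have hbig1 : (0:ℝ) ≤ 35840000*C*Real.exp 1*c^3*ε⁻¹ := by
    linarith only [hbase0]
  rw [h2a]
  calc M * (1-s)⁻¹ ≤ M * (4*ε⁻¹) := mul_le_mul_of_nonneg_left hinv hM0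
    _ = 560000*C*Real.exp 1*c^3*(ε⁻¹*ε⁻¹)*(A+Real.exp 1)^3 := by rw [hMdef]; ring
    _ ≤ 560000*C*Real.exp 1*c^3*(ε⁻¹*ε⁻¹)*(64*A^3) := by
        have h1 : A + Real.exp 1 ≤ 4*A := by linarith only [hA1, hE3]
        have h2 : (A+Real.exp 1)^3 ≤ 64*A^3 := by
          nlinarith only [pow_le_pow_left₀ hAE0 h1 3]
        have hb : (0:ℝ) ≤ 560000*C*Real.exp 1*c^3*(ε⁻¹*ε⁻¹) := by
          nlinarith only [mul_nonneg (mul_nonneg (mul_nonneg hC0.le hE0.le) hc30)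
            (mul_nonneg hεi0 hεi0)]
        exact mul_le_mul_of_nonneg_left h2 hb
    _ = 35840000*C*Real.exp 1*c^3*ε⁻¹*((1/ε)*A^3) := by rw [one_div]; ring
    _ ≤ 35840000*C*Real.exp 1*c^3*ε⁻¹*(24000*((1/ε)*A^3)^(1-2*ε)) :=
        mul_le_mul_of_nonneg_left hsplitP hbig1
    _ ≤ 35840000*C*Real.exp 1*c^3*ε⁻¹*(24000*(ostar (1/ε))^(1-2*ε)) := by
        apply mul_le_mul_of_nonneg_left _ hbig1
        exact mul_le_mul_of_nonneg_left hmonostar (by norm_num)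
    _ = 860160000000*C*Real.exp 1*c^3*ε⁻¹*(ostar (1/ε))^(1-2*ε) := by ring
    _ ≤ 1000000000000 * C * Real.exp 1 * c^3 * (1/ε) * ostar (1/ε) ^ (1-2*ε) := by
        refine mul_le_mul_of_nonneg_right ?_ hro
        rw [one_div]
        linarith only [hbase0]
end
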